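/- arXiv:2402.14986 — 5 statements merged into one kernel-verified Lean document; each statement's English description precedes it below -/
import Mathlib

section
/- Let n ≥ 1 and let G and G' be graphs each with exactly n edges. Then ED(G) = ED(G') as multisets if and only if ι_n[G] = ι_n[G'] in K₀(Γ_{n,n−1}). -/
open SimpleGraph

/-- A finite simple graph, packaged with its (finite) vertex type. -/
structure FGraph : Type 1 where
  V : Type
  [finV : Finite V]
  graph : SimpleGraph V

attribute [instance] FGraph.finV

namespace FGraph

/-- Two finite graphs are isomorphic if there is a graph isomorphism between them. -/
def IsIsoTo (G H : FGraph) : Prop := Nonempty (G.graph ≃g H.graph)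

instance setoid : Setoid FGraph where
  r := IsIsoTo
  iseqv := ⟨fun G => ⟨RelIso.refl G.graph.Adj⟩, fun ⟨e⟩ => ⟨e.symm⟩, fun ⟨e⟩ ⟨f⟩ => ⟨e.trans f⟩⟩

end FGraph

/-- Isomorphism classes of finite simple graphs. -/
def GraphClass : Type 1 := Quotient FGraph.setoid

namespace FGraph

/-- The isomorphism class of a finite graph. -/
def cls (G : FGraph) : GraphClass := Quotient.mk _ G

/-- The number of edges of a finite graph. -/
noncomputable def edgeCount (G : FGraph) : ℕ := G.graph.edgeSet.ncard

/-- The edge-deleted subgraph `G - e`: same vertices, with the edge `e` removed. -/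
def deleteEdge (G : FGraph) (e : Sym2 G.V) : FGraph :=
  { V := G.V, graph := G.graph.deleteEdges {e} }

/-- The multiset of edge-deleted subgraphs of `G` (one for each edge), as graphs. -/
noncomputable def deckGraphs (G : FGraph) : Multiset FGraph :=
  (G.graph.edgeSet.toFinite.toFinset.val).map fun e => G.deleteEdge e

/-- The edge deck of `G` : the multiset of isomorphism classes of the edge-deleted
subgraphs `G - e`, one for each edge `e` of `G`. -/
noncomputable def edgeDeck (G : FGraph) : Multiset GraphClass :=
  G.deckGraphs.map cls

lemma exists_of_mem_edgeDeck {G : FGraph} {c : GraphClass} (hc : c ∈ G.edgeDeck) :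
    ∃ H : FGraph, H.cls = c ∧ H.edgeCount = G.edgeCount - 1 := by
  classical
  rw [edgeDeck, deckGraphs, Multiset.map_map] at hc
  obtain ⟨e, he, rfl⟩ := Multiset.mem_map.mp hc
  refine ⟨G.deleteEdge e, rfl, ?_⟩
  have he' : e ∈ G.graph.edgeSet := by
    simpa using (Set.Finite.mem_toFinset _).mp he
  simp only [edgeCount, deleteEdge, SimpleGraph.edgeSet_deleteEdges]
  exact Set.ncard_sdiff_singleton_of_mem he'

/-- The disjoint union of two finite graphs. -/
def disjUnion (G H : FGraph) : FGraph :=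
  { V := G.V ⊕ H.V, graph := G.graph ⊕g H.graph }

end FGraph

/-- `𝒢 n` is the set of isomorphism classes of graphs with exactly `n` edges. -/
def GClass (n : ℕ) : Type 1 :=
  {c : GraphClass // ∃ G : FGraph, G.cls = c ∧ G.edgeCount = n}

/-- Given a graph `G` with `n` edges, sum a function `f` over the edge deck of `G`,
regarded as a multiset of isomorphism classes of graphs with `n - 1` edges. -/
noncomputable def FGraph.edgeDeckSum (n : ℕ) (G : FGraph) (hG : G.edgeCount = n)
    {β : Type*} [AddCommMonoid β] (f : GClass (n - 1) → β) : β :=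
  (G.edgeDeck.attach.map fun c => f ⟨c.1, by
    obtain ⟨H, h1, h2⟩ := FGraph.exists_of_mem_edgeDeck c.2
    exact ⟨H, h1, by rw [h2, hG]⟩⟩).sum

/-- The subgroup of relations defining `K₀(Γ_{n,n-1})`: for every graph `G` with `n`
edges, `[G] = Σ_{C ∈ ED(G)} [C]`. -/
def K0Rel (n : ℕ) : AddSubgroup (FreeAbelianGroup (GClass n ⊕ GClass (n - 1))) :=
  AddSubgroup.closure
    {x | ∃ (G : FGraph) (hG : G.edgeCount = n),
      x = FreeAbelianGroup.of (Sum.inl ⟨G.cls, G, rfl, hG⟩)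
        - G.edgeDeckSum n hG (fun c => FreeAbelianGroup.of (Sum.inr c))}

/-- `K₀(Γ_{n,n-1})`: the free abelian group on `𝒢 n ⊔ 𝒢 (n-1)` modulo the edge-deck
relations. -/
abbrev K0Gamma (n : ℕ) : Type 1 :=
  FreeAbelianGroup (GClass n ⊕ GClass (n - 1)) ⧸ K0Rel n

/-- The map `ι_n : 𝒢 n → K₀(Γ_{n,n-1})` sending a class to its image in the quotient. -/
noncomputable def iotaCls (n : ℕ) (c : GClass n) : K0Gamma n :=
  QuotientAddGroup.mk (FreeAbelianGroup.of (Sum.inl c))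

/-- Generalized edge reconstruction fails for `n`-edge graphs with `k` pieces: there are
two distinct multisets of `k` isomorphism classes of graphs with exactly `n` edges whose
total edge decks agree. -/
def GERFails (n k : ℕ) : Prop :=
  ∃ M M' : Multiset FGraph,
    Multiset.card M = k ∧ Multiset.card M' = k ∧
    (∀ G ∈ M, G.edgeCount = n) ∧ (∀ G ∈ M', G.edgeCount = n) ∧
    M.map FGraph.cls ≠ M'.map FGraph.cls ∧
    (M.map FGraph.edgeDeck).sum = (M'.map FGraph.edgeDeck).sum

/-- `kmin n` is the least `k ≥ 1` for which generalized edge reconstruction fails for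
`n`-edge graphs. -/
noncomputable def kmin (n : ℕ) : ℕ := sInf {k | 1 ≤ k ∧ GERFails n k}

/-- The graph `2K₂`: four vertices, two disjoint edges. -/
def twoK2 : FGraph :=
  { V := Fin 4, graph := SimpleGraph.fromEdgeSet {s(0, 1), s(2, 3)} }

/-- The graph `P₃ ⊔ K₁`: a two-edge path together with an isolated vertex. -/
def p3K1 : FGraph :=
  { V := Fin 4, graph := SimpleGraph.fromEdgeSet {s(0, 1), s(1, 2)} }

/-- The graph `K₃ ⊔ K₁`: a triangle together with an isolated vertex. -/
def k3K1 : FGraph :=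
  { V := Fin 4, graph := SimpleGraph.fromEdgeSet {s(0, 1), s(1, 2), s(0, 2)} }

/-- The star `K_{1,3}`: a center vertex adjacent to three leaves. -/
def k13 : FGraph :=
  { V := Fin 4, graph := SimpleGraph.fromEdgeSet {s(0, 1), s(0, 2), s(0, 3)} }

/-! The relations of `K₀(Γ_{n,n−1})` say that `ι_n[G]` is the formal sum of the edge deck of `G`,
so equal decks give equal images. Conversely, sending a class of `𝒢_n` to the formal sum of its
edge deck in the free abelian group on all graph classes, and a class of `𝒢_{n−1}` to itself,
kills every relation; the induced map sends `ι_n[G]` to the formal sum of `ED(G)`, and a multiset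
is determined by its formal sum. -/

open FreeAbelianGroup

theorem FreeAbelianGroup.coeff_sum_map_of {α : Type*} [DecidableEq α] (m : Multiset α) (x : α) :
    coeff x (m.map of).sum = m.count x := by
  induction m using Multiset.induction_on with
  | empty => simp
  | cons a m ih =>
    rw [Multiset.map_cons, Multiset.sum_cons, map_add, ih, Multiset.count_cons]
    simp [coeff, Finsupp.single_apply, eq_comm, add_comm]

theorem FreeAbelianGroup.sum_map_of_injective {α : Type*} :
    Function.Injective fun m : Multiset α => (m.map of).sum := by
  classical
  intro m m' h
  ext x
  simpa only [coeff_sum_map_of, Nat.cast_inj] using congrArg (coeff x) h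

def SimpleGraph.Iso.deleteEdges {V W : Type*} {G : SimpleGraph V} {G' : SimpleGraph W}
    (f : G ≃g G') (s : Set (Sym2 V)) : G.deleteEdges s ≃g G'.deleteEdges (Sym2.map f '' s) where
  toEquiv := f.toEquiv
  map_rel_iff' {a b} := by
    simp [← Sym2.map_mk, (Sym2.map.injective f.injective).mem_set_image, f.map_adj_iff]

namespace FGraph

theorem cls_deleteEdge_map {G H : FGraph} (f : G.graph ≃g H.graph) (s : Sym2 G.V) :
    (G.deleteEdge s).cls = (H.deleteEdge (Sym2.map f s)).cls := by
  have e : G.graph.deleteEdges {s} ≃g H.graph.deleteEdges {Sym2.map f s} := by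
    simpa only [Set.image_singleton] using f.deleteEdges {s}
  exact Quotient.sound ⟨e⟩

theorem edgeSet_toFinset_eq_map {G H : FGraph} (f : G.graph ≃g H.graph) :
    H.graph.edgeSet.toFinite.toFinset =
      G.graph.edgeSet.toFinite.toFinset.map f.toEmbedding.sym2Map := by
  ext s
  simp only [Set.Finite.mem_toFinset, Finset.mem_map, Function.Embedding.sym2Map_apply]
  constructor
  · intro hs
    obtain ⟨⟨t, ht⟩, hts⟩ := f.mapEdgeSet.surjective ⟨s, hs⟩
    exact ⟨t, ht, congrArg Subtype.val hts⟩
  · rintro ⟨t, ht, rfl⟩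
    exact f.map_mem_edgeSet_iff.mpr ht

theorem edgeDeck_eq_of_iso {G H : FGraph} (f : G.graph ≃g H.graph) :
    G.edgeDeck = H.edgeDeck := by
  simp only [edgeDeck, deckGraphs, edgeSet_toFinset_eq_map f, Finset.map_val, Multiset.map_map]
  exact Multiset.map_congr rfl fun s _ => cls_deleteEdge_map f s

end FGraph

noncomputable def GraphClass.edgeDeck : GraphClass → Multiset GraphClass :=
  Quotient.lift FGraph.edgeDeck fun _ _ ⟨f⟩ => FGraph.edgeDeck_eq_of_iso f

namespace FGraph

variable {n : ℕ} {G : FGraph} {β : Type*} [AddCommMonoid β]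

theorem edgeDeckSum_eq_sum_map (hG : G.edgeCount = n) {f : GClass (n - 1) → β}
    {g : GraphClass → β} (hfg : ∀ c, f c = g c.1) :
    G.edgeDeckSum n hG f = (G.edgeDeck.map g).sum := by
  rw [edgeDeckSum, ← Multiset.attach_map_val' _ g]
  exact congrArg _ (Multiset.map_congr rfl fun c _ => hfg _)

theorem edgeDeckSum_congr {G' : FGraph} (hG : G.edgeCount = n) (hG' : G'.edgeCount = n)
    (h : G.edgeDeck = G'.edgeDeck) (f : GClass (n - 1) → β) :
    G.edgeDeckSum n hG f = G'.edgeDeckSum n hG' f := by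
  classical
  let g : GraphClass → β := fun c =>
    if hc : ∃ H : FGraph, H.cls = c ∧ H.edgeCount = n - 1 then f ⟨c, hc⟩ else 0
  have hfg : ∀ c, f c = g c.1 := fun c => by simp only [g, dif_pos c.2]; rfl
  rw [edgeDeckSum_eq_sum_map hG hfg, edgeDeckSum_eq_sum_map hG' hfg, h]

theorem map_edgeDeckSum {γ : Type*} [AddCommMonoid γ] (hG : G.edgeCount = n)
    (φ : β →+ γ) (f : GClass (n - 1) → β) :
    φ (G.edgeDeckSum n hG f) = G.edgeDeckSum n hG fun c => φ (f c) := by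
  rw [edgeDeckSum, map_multiset_sum, Multiset.map_map]
  rfl

end FGraph

theorem iotaCls_eq_mk_edgeDeckSum {n : ℕ} (G : FGraph) (hG : G.edgeCount = n) :
    iotaCls n ⟨G.cls, G, rfl, hG⟩ =
      QuotientAddGroup.mk (G.edgeDeckSum n hG fun c => of (Sum.inr c)) :=
  QuotientAddGroup.eq_iff_sub_mem.mpr (AddSubgroup.subset_closure ⟨G, hG, rfl⟩)

noncomputable def edgeDeckHom (n : ℕ) :
    FreeAbelianGroup (GClass n ⊕ GClass (n - 1)) →+ FreeAbelianGroup GraphClass :=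
  lift (Sum.elim (fun c => (c.1.edgeDeck.map of).sum) fun c => of c.1)

theorem K0Rel_le_ker_edgeDeckHom (n : ℕ) : K0Rel n ≤ (edgeDeckHom n).ker := by
  rw [K0Rel, AddSubgroup.closure_le]
  rintro _ ⟨G, hG, rfl⟩
  have hinr : ∀ c : GClass (n - 1), edgeDeckHom n (of (Sum.inr c)) = of c.1 :=
    fun c => lift_apply_of _ _
  rw [SetLike.mem_coe, AddMonoidHom.mem_ker, map_sub, sub_eq_zero, FGraph.map_edgeDeckSum,
    FGraph.edgeDeckSum_eq_sum_map hG hinr]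
  exact lift_apply_of _ _

noncomputable def K0Gamma.edgeDeckHom (n : ℕ) : K0Gamma n →+ FreeAbelianGroup GraphClass :=
  QuotientAddGroup.lift _ (_root_.edgeDeckHom n) (K0Rel_le_ker_edgeDeckHom n)

theorem K0Gamma.edgeDeckHom_iotaCls {n : ℕ} (G : FGraph) (hG : G.edgeCount = n) :
    K0Gamma.edgeDeckHom n (iotaCls n ⟨G.cls, G, rfl, hG⟩) = (G.edgeDeck.map of).sum :=
  lift_apply_of _ _

theorem edgeDeck_eq_iff_iota_eq_general (n : ℕ) (G G' : FGraph)
    (hG : G.edgeCount = n) (hG' : G'.edgeCount = n) :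
    G.edgeDeck = G'.edgeDeck ↔
      iotaCls n ⟨G.cls, G, rfl, hG⟩ = iotaCls n ⟨G'.cls, G', rfl, hG'⟩ := by
  constructor
  · intro h
    rw [iotaCls_eq_mk_edgeDeckSum G hG, iotaCls_eq_mk_edgeDeckSum G' hG',
      FGraph.edgeDeckSum_congr hG hG' h]
  · intro h
    exact sum_map_of_injective <| (K0Gamma.edgeDeckHom_iotaCls G hG).symm.trans <|
      (congrArg _ h).trans (K0Gamma.edgeDeckHom_iotaCls G' hG')

/-- for graphs `G`, `G'` with exactly `n ≥ 1` edges, `ED(G) = ED(G')`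
if and only if `ι_n [G] = ι_n [G']` in `K₀(Γ_{n,n-1})`. -/
theorem edgeDeck_eq_iff_iota_eq (n : ℕ) (hn : 1 ≤ n) (G G' : FGraph)
    (hG : G.edgeCount = n) (hG' : G'.edgeCount = n) :
    G.edgeDeck = G'.edgeDeck ↔
      iotaCls n ⟨G.cls, G, rfl, hG⟩ = iotaCls n ⟨G'.cls, G', rfl, hG'⟩ :=
  edgeDeck_eq_iff_iota_eq_general n G G' hG hG'
end

section
/- Let n ≥ 1. The group homomorphism K₀(ι_n) : ℤ[𝒢_n] → K₀(Γ_{n,n−1}), defined on generators by [G] ↦ ι_n[G], is injective if and only if generalized edge reconstruction holds for n-edge graphs: for every k ≥ 1 and every pair of multisets M, M' each consisting of k isomorphism classes of graphs with exactly n edges, if Σ_{[G] ∈ M} ED(G) = Σ_{[G'] ∈ M'} ED(G') as multisets, then M = M'. -/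
open SimpleGraph

section K0Aux

open FreeAbelianGroup

/-- Graphs with exactly `n` edges (not up to isomorphism). -/
abbrev SubG (n : ℕ) := {G : FGraph // G.edgeCount = n}

/-- The class in `GClass n` of a graph with `n` edges. -/
noncomputable def gclOf (n : ℕ) (G : SubG n) : GClass n := ⟨G.1.cls, G.1, rfl, G.2⟩

/-- The relator associated to a graph with `n` edges. -/
noncomputable def relOf (n : ℕ) (G : SubG n) :
    FreeAbelianGroup (GClass n ⊕ GClass (n - 1)) :=
  FreeAbelianGroup.of (Sum.inl (gclOf n G))
    - G.1.edgeDeckSum n G.2 (fun c => FreeAbelianGroup.of (Sum.inr c))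

open Classical in
/-- The deck-class inclusion, extended by zero. -/
noncomputable def psiFn (n : ℕ) : GraphClass → FreeAbelianGroup (GClass n ⊕ GClass (n - 1)) :=
  fun c => if h : ∃ H : FGraph, H.cls = c ∧ H.edgeCount = n - 1
    then FreeAbelianGroup.of (Sum.inr ⟨c, h⟩) else 0

lemma edgeDeckSum_eq_psi (n : ℕ) (G : SubG n) :
    G.1.edgeDeckSum n G.2 (fun c => FreeAbelianGroup.of (Sum.inr c))
      = (G.1.edgeDeck.map (psiFn n)).sum := by
  rw [FGraph.edgeDeckSum]
  congr 1
  rw [← Multiset.attach_map_val' G.1.edgeDeck (psiFn n)]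
  refine Multiset.map_congr rfl ?_
  intro c hc
  obtain ⟨H, h1, h2⟩ := FGraph.exists_of_mem_edgeDeck c.2
  have hex : ∃ H : FGraph, H.cls = c.1 ∧ H.edgeCount = n - 1 := ⟨H, h1, by rw [h2, G.2]⟩
  simp only [psiFn, dif_pos hex]

/-- Projection onto the `inl` component. -/
noncomputable def pinl (n : ℕ) :
    FreeAbelianGroup (GClass n ⊕ GClass (n - 1)) →+ FreeAbelianGroup (GClass n) :=
  FreeAbelianGroup.lift (Sum.elim FreeAbelianGroup.of (fun _ => 0))

/-- Projection onto the `inr` component, landing in classes. -/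
noncomputable def pinr (n : ℕ) :
    FreeAbelianGroup (GClass n ⊕ GClass (n - 1)) →+ FreeAbelianGroup GraphClass :=
  FreeAbelianGroup.lift (Sum.elim (fun _ => 0) (fun c => FreeAbelianGroup.of c.1))

lemma pinl_map_inl (n : ℕ) (a : FreeAbelianGroup (GClass n)) :
    pinl n (FreeAbelianGroup.map Sum.inl a) = a := by
  have : (pinl n).comp (FreeAbelianGroup.map Sum.inl) = AddMonoidHom.id _ := by
    ext x
    simp [pinl, FreeAbelianGroup.map_of_apply]
  exact DFunLike.congr_fun this a

lemma pinr_map_inl (n : ℕ) (a : FreeAbelianGroup (GClass n)) :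
    pinr n (FreeAbelianGroup.map Sum.inl a) = 0 := by
  have : (pinr n).comp (FreeAbelianGroup.map Sum.inl) = 0 := by
    ext x
    simp [pinr, FreeAbelianGroup.map_of_apply]
  exact DFunLike.congr_fun this a

lemma pinl_relOf (n : ℕ) (G : SubG n) :
    pinl n (relOf n G) = FreeAbelianGroup.of (gclOf n G) := by
  rw [relOf, map_sub, FGraph.edgeDeckSum, map_multiset_sum, Multiset.map_map]
  simp [pinl]
  exact Multiset.sum_eq_zero (fun y hy => by obtain ⟨x, _, rfl⟩ := Multiset.mem_map.mp hy; rfl)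

lemma pinr_relOf (n : ℕ) (G : SubG n) :
    pinr n (relOf n G) = -(G.1.edgeDeck.map FreeAbelianGroup.of).sum := by
  rw [relOf, map_sub, FGraph.edgeDeckSum, map_multiset_sum, Multiset.map_map]
  rw [← Multiset.attach_map_val' G.1.edgeDeck (fun c => FreeAbelianGroup.of c)]
  simp [pinr, Function.comp]
  rw [← Multiset.attach_map_val' G.1.edgeDeck (fun c => FreeAbelianGroup.of c)]
  rfl

lemma mem_K0Rel_exists (n : ℕ) {x : FreeAbelianGroup (GClass n ⊕ GClass (n - 1))}
    (hx : x ∈ K0Rel n) :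
    ∃ A B : Multiset (SubG n),
      x = (A.map (relOf n)).sum - (B.map (relOf n)).sum := by
  refine AddSubgroup.closure_induction ?_ ?_ ?_ ?_ hx
  · rintro y ⟨G, hG, rfl⟩
    exact ⟨{⟨G, hG⟩}, 0, by simp [relOf, gclOf]⟩
  · exact ⟨0, 0, by simp⟩
  · rintro x y _ _ ⟨A1, B1, rfl⟩ ⟨A2, B2, rfl⟩
    exact ⟨A1 + A2, B1 + B2, by rw [Multiset.map_add, Multiset.map_add,
      Multiset.sum_add, Multiset.sum_add]; abel⟩
  · rintro x _ ⟨A, B, rfl⟩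
    exact ⟨B, A, by abel⟩

lemma map_sum_edgeDeck (n : ℕ) {β : Type*} [AddCommMonoid β]
    (f : GraphClass → β) (A : Multiset (SubG n)) :
    (A.map fun G => ((G.1.edgeDeck.map f).sum)).sum
      = (((A.map fun G : SubG n => G.1.edgeDeck).sum).map f).sum := by
  induction A using Multiset.induction with
  | empty => simp
  | cons a s ih => simp [Multiset.sum_cons, ih]

lemma card_deck (n : ℕ) (G : SubG n) : Multiset.card G.1.edgeDeck = n := by
  rw [FGraph.edgeDeck, Multiset.card_map, FGraph.deckGraphs, Multiset.card_map]
  rw [show (Multiset.card G.1.graph.edgeSet.toFinite.toFinset.val)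
      = G.1.graph.edgeSet.toFinite.toFinset.card from rfl,
    ← Set.ncard_eq_toFinset_card _ G.1.graph.edgeSet.toFinite]
  exact G.2

lemma card_totalDeck (n : ℕ) (A : Multiset (SubG n)) :
    Multiset.card ((A.map fun G : SubG n => G.1.edgeDeck).sum) = n * Multiset.card A := by
  induction A using Multiset.induction with
  | empty => simp
  | cons a s ih => simp [Multiset.sum_cons, ih, card_deck n a, Nat.mul_succ]; ring

lemma sum_indicator (α : Type*) [DecidableEq α] (s : Multiset α) (x : α) :
    (s.map fun b => if b = x then (1 : ℤ) else 0).sum = (s.count x : ℤ) := by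
  induction s using Multiset.induction with
  | empty => simp
  | cons a s ih =>
    rw [Multiset.map_cons, Multiset.sum_cons, ih, Multiset.count_cons]
    by_cases h : a = x
    · subst h
      rw [if_pos rfl, if_pos rfl]
      push_cast
      ring
    · rw [if_neg h, if_neg (fun hxa => h hxa.symm)]
      simp

lemma multiset_eq_of_sum_of_eq {α : Type*} {s t : Multiset α}
    (h : (s.map FreeAbelianGroup.of).sum = (t.map FreeAbelianGroup.of).sum) : s = t := by
  classical
  ext x
  have h2 := congrArg (FreeAbelianGroup.lift (fun b => if b = x then (1 : ℤ) else 0)) h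
  rw [map_multiset_sum, map_multiset_sum, Multiset.map_map, Multiset.map_map] at h2
  simp only [Function.comp, FreeAbelianGroup.lift_apply_of] at h2
  rw [sum_indicator, sum_indicator] at h2
  exact_mod_cast h2

lemma sum_map_neg' {α β : Type*} [AddCommGroup β] (s : Multiset α) (f : α → β) :
    (s.map fun x => -(f x)).sum = -((s.map f).sum) := by
  induction s using Multiset.induction with
  | empty => simp
  | cons a s ih => simp [ih]; abel

lemma liftIota_eq (n : ℕ) (a : FreeAbelianGroup (GClass n)) :
    (FreeAbelianGroup.lift (iotaCls n)) a
      = QuotientAddGroup.mk' (K0Rel n) (FreeAbelianGroup.map Sum.inl a) := by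
  have : (FreeAbelianGroup.lift (iotaCls n) : FreeAbelianGroup (GClass n) →+ K0Gamma n)
      = (QuotientAddGroup.mk' (K0Rel n)).comp (FreeAbelianGroup.map Sum.inl) := by
    ext c
    simp [iotaCls, FreeAbelianGroup.map_of_apply]
  rw [this]; rfl

lemma mk_relOf (n : ℕ) (G : SubG n) :
    QuotientAddGroup.mk' (K0Rel n) (FreeAbelianGroup.of (Sum.inl (gclOf n G)))
      = QuotientAddGroup.mk' (K0Rel n) ((G.1.edgeDeck.map (psiFn n)).sum) := by
  have hrel : relOf n G ∈ K0Rel n :=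
    AddSubgroup.subset_closure ⟨G.1, G.2, rfl⟩
  have h0 : (QuotientAddGroup.mk' (K0Rel n)) (relOf n G) = 0 := by
    rwa [QuotientAddGroup.mk'_apply, QuotientAddGroup.eq_zero_iff]
  rw [relOf, edgeDeckSum_eq_psi, map_sub, sub_eq_zero] at h0
  exact h0

end K0Aux

/-- `K₀(ι_n) : ℤ[𝒢_n] → K₀(Γ_{n,n-1})` is injective if and only if
generalized edge reconstruction holds for `n`-edge graphs: any two multisets of `k`
isomorphism classes of `n`-edge graphs with the same total edge deck are equal. -/
theorem K0iota_injective_iff_generalized_edge_reconstruction (n : ℕ) (hn : 1 ≤ n) :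
    Function.Injective
        ⇑(FreeAbelianGroup.lift (iotaCls n) : FreeAbelianGroup (GClass n) →+ K0Gamma n) ↔
      (∀ k : ℕ, 1 ≤ k → ∀ M M' : Multiset FGraph,
        Multiset.card M = k → Multiset.card M' = k →
        (∀ G ∈ M, G.edgeCount = n) → (∀ G ∈ M', G.edgeCount = n) →
        (M.map FGraph.edgeDeck).sum = (M'.map FGraph.edgeDeck).sum →
        M.map FGraph.cls = M'.map FGraph.cls) := by
  classical
  constructor
  · intro hinj k hk M M' hcM hcM' hM hM' hdeck
    set A : Multiset (SubG n) := M.attach.map (fun G => ⟨G.1, hM G.1 G.2⟩) with hAdef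
    set B : Multiset (SubG n) := M'.attach.map (fun G => ⟨G.1, hM' G.1 G.2⟩) with hBdef
    have hAval : A.map Subtype.val = M := by
      rw [hAdef, Multiset.map_map]; exact M.attach_map_val
    have hBval : B.map Subtype.val = M' := by
      rw [hBdef, Multiset.map_map]; exact M'.attach_map_val
    have key : ∀ C : Multiset (SubG n),
        (FreeAbelianGroup.lift (iotaCls n)) ((C.map fun G => FreeAbelianGroup.of (gclOf n G)).sum)
          = (QuotientAddGroup.mk' (K0Rel n))
              ((((C.map fun G : SubG n => G.1.edgeDeck).sum).map (psiFn n)).sum) := by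
      intro C
      rw [← map_sum_edgeDeck n (psiFn n) C, map_multiset_sum, map_multiset_sum,
        Multiset.map_map, Multiset.map_map]
      refine congrArg Multiset.sum (Multiset.map_congr rfl ?_)
      intro G _
      show (FreeAbelianGroup.lift (iotaCls n)) (FreeAbelianGroup.of (gclOf n G))
        = (QuotientAddGroup.mk' (K0Rel n)) ((G.1.edgeDeck.map (psiFn n)).sum)
      rw [liftIota_eq, FreeAbelianGroup.map_of_apply]
      exact mk_relOf n G
    have hMA : (A.map fun G : SubG n => G.1.edgeDeck).sum = (M.map FGraph.edgeDeck).sum := by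
      rw [hAdef, Multiset.map_map]
      exact congrArg Multiset.sum (Multiset.attach_map_val' M FGraph.edgeDeck)
    have hMB : (B.map fun G : SubG n => G.1.edgeDeck).sum = (M'.map FGraph.edgeDeck).sum := by
      rw [hBdef, Multiset.map_map]
      exact congrArg Multiset.sum (Multiset.attach_map_val' M' FGraph.edgeDeck)
    clear_value A B
    have hdd : (A.map fun G : SubG n => G.1.edgeDeck).sum
        = (B.map fun G : SubG n => G.1.edgeDeck).sum :=
      hMA.trans (hdeck.trans hMB.symm)
    have ha0 : (FreeAbelianGroup.lift (iotaCls n))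
        ((A.map fun G => FreeAbelianGroup.of (gclOf n G)).sum
          - (B.map fun G => FreeAbelianGroup.of (gclOf n G)).sum) = 0 := by
      rw [map_sub, key A, key B, hdd, sub_self]
    have haz : (A.map fun G => FreeAbelianGroup.of (gclOf n G)).sum
        - (B.map fun G => FreeAbelianGroup.of (gclOf n G)).sum = 0 :=
      hinj (ha0.trans (map_zero _).symm)
    have hgcl : A.map (gclOf n) = B.map (gclOf n) := by
      apply multiset_eq_of_sum_of_eq
      rw [Multiset.map_map, Multiset.map_map]
      exact sub_eq_zero.mp haz
    calc M.map FGraph.cls = (A.map (gclOf n)).map Subtype.val := by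
          erw [Multiset.map_map, ← hAval, Multiset.map_map]
          exact Multiset.map_congr rfl fun _ _ => rfl
      _ = (B.map (gclOf n)).map Subtype.val := by rw [hgcl]
      _ = M'.map FGraph.cls := by
          erw [Multiset.map_map, ← hBval, Multiset.map_map]
          exact Multiset.map_congr rfl fun _ _ => rfl

  · intro H
    rw [injective_iff_map_eq_zero]
    intro a ha
    rw [liftIota_eq] at ha
    have hmem : FreeAbelianGroup.map Sum.inl a ∈ K0Rel n := by
      rwa [QuotientAddGroup.mk'_apply, QuotientAddGroup.eq_zero_iff] at ha
    obtain ⟨A, B, hAB⟩ := mem_K0Rel_exists n hmem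
    have hA : a = ((A.map (gclOf n)).map FreeAbelianGroup.of).sum
        - ((B.map (gclOf n)).map FreeAbelianGroup.of).sum := by
      have h := congrArg (pinl n) hAB
      rw [pinl_map_inl, map_sub, map_multiset_sum, map_multiset_sum,
        Multiset.map_map, Multiset.map_map] at h
      have e1 : ∀ C : Multiset (SubG n),
          C.map (⇑(pinl n) ∘ relOf n) = C.map (fun G => FreeAbelianGroup.of (gclOf n G)) :=
        fun C => Multiset.map_congr rfl (fun G _ => pinl_relOf n G)
      rw [e1, e1] at h
      rw [Multiset.map_map, Multiset.map_map]
      exact h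
    have hdeck : (A.map fun G : SubG n => G.1.edgeDeck).sum
        = (B.map fun G : SubG n => G.1.edgeDeck).sum := by
      have h := congrArg (pinr n) hAB
      rw [pinr_map_inl, map_sub, map_multiset_sum, map_multiset_sum,
        Multiset.map_map, Multiset.map_map] at h
      have e1 : ∀ C : Multiset (SubG n),
          C.map (⇑(pinr n) ∘ relOf n)
            = C.map (fun G : SubG n => -((G.1.edgeDeck.map FreeAbelianGroup.of).sum)) :=
        fun C => Multiset.map_congr rfl (fun G _ => pinr_relOf n G)
      rw [e1, e1, sum_map_neg', sum_map_neg', eq_comm, sub_eq_zero] at h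
      have h' := neg_injective h
      apply multiset_eq_of_sum_of_eq
      rw [← map_sum_edgeDeck n FreeAbelianGroup.of A, ← map_sum_edgeDeck n FreeAbelianGroup.of B]
      exact h'
    have hcard : Multiset.card A = Multiset.card B := by
      have hc := congrArg Multiset.card hdeck
      rw [card_totalDeck, card_totalDeck] at hc
      exact Nat.eq_of_mul_eq_mul_left hn hc
    by_cases hk0 : Multiset.card A = 0
    · have hA0 : A = 0 := Multiset.card_eq_zero.mp hk0
      have hB0 : B = 0 := Multiset.card_eq_zero.mp (hcard ▸ hk0)
      rw [hA, hA0, hB0]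
      simp
    · have hge : 1 ≤ Multiset.card A := Nat.one_le_iff_ne_zero.mpr hk0
      have hclseq := H (Multiset.card A) hge (A.map Subtype.val) (B.map Subtype.val)
        (by rw [Multiset.card_map]) (by rw [Multiset.card_map, hcard])
        (by rintro G hG; obtain ⟨g, _, rfl⟩ := Multiset.mem_map.mp hG; exact g.2)
        (by rintro G hG; obtain ⟨g, _, rfl⟩ := Multiset.mem_map.mp hG; exact g.2)
        (by rw [Multiset.map_map, Multiset.map_map]; exact hdeck)
      have hval : ∀ C : Multiset (SubG n),
          (C.map (gclOf n)).map Subtype.val = (C.map Subtype.val).map FGraph.cls := by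
        intro C
        erw [Multiset.map_map, Multiset.map_map]
        exact Multiset.map_congr rfl fun _ _ => rfl
      have hg : A.map (gclOf n) = B.map (gclOf n) := by
        apply Multiset.map_injective (Subtype.val_injective :
          Function.Injective (Subtype.val : GClass n → GraphClass))
        rw [hval, hval]
        exact hclseq
      rw [hA, hg, sub_self]
end

section
/- For every n ≥ 2, the generalized edge reconstruction conjecture fails: there exist k ≥ 1 and two distinct multisets M ≠ M', each consisting of k isomorphism classes of graphs with exactly n edges, such that Σ_{[G] ∈ M} ED(G) = Σ_{[G'] ∈ M'} ED(G') as multisets. That is, some collection of n-edge graphs G₁, …, G_k is not reconstructable up to isomorphism from the union of the multisets ED(G₁), …, ED(G_k). -/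
open SimpleGraph

/-!
Edge decks behave like a derivation with respect to disjoint union:
`ED(G ⊔ H) = ED(G) ⊔ H + G ⊔ ED(H)`. So if `M - M'` is a formal difference of multisets of
graphs with vanishing total deck and `ED(X) = ED(Y)`, then the product `(M - M')(X - Y)` again
has vanishing total deck. Starting from the pairs `2K₂, P₃ ⊔ K₁` (two edges) and
`K₃ ⊔ K₁, K₁,₃` (three edges) and multiplying repeatedly by `2K₂ - P₃ ⊔ K₁` gives colliding
multisets for every `n ≥ 2`. They are distinct because the number of ordered induced two-edge
paths is additive under disjoint union, and it is `0 mod 4` on the positive side and `2 mod 4` on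
the negative side throughout.
-/

namespace SimpleGraph

variable {V W : Type*}

lemma edgeSet_fromEdgeSet_of_not_isDiag {s : Set (Sym2 V)} (hs : ∀ e ∈ s, ¬ e.IsDiag) :
    (fromEdgeSet s).edgeSet = s := by
  rw [edgeSet_fromEdgeSet, sdiff_eq_left, Set.disjoint_left]
  exact hs

lemma edgeSet_sum (G : SimpleGraph V) (H : SimpleGraph W) :
    (G ⊕g H).edgeSet = Sym2.map Sum.inl '' G.edgeSet ∪ Sym2.map Sum.inr '' H.edgeSet := by
  ext ⟨x | x, y | y⟩ <;> simp [Sym2.exists, and_or_left, exists_or, adj_comm]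

lemma exists_finset_edgeSet_sum {G : SimpleGraph V} {H : SimpleGraph W} {sG : Finset (Sym2 V)}
    {sH : Finset (Sym2 W)} (hG : (sG : Set (Sym2 V)) = G.edgeSet)
    (hH : (sH : Set (Sym2 W)) = H.edgeSet) :
    ∃ s : Finset (Sym2 (V ⊕ W)), (s : Set (Sym2 (V ⊕ W))) = (G ⊕g H).edgeSet ∧
      s.val = sG.val.map (Sym2.map Sum.inl) + sH.val.map (Sym2.map Sum.inr) := by
  have hdisj : Disjoint (sG.map Function.Embedding.inl.sym2Map)
      (sH.map Function.Embedding.inr.sym2Map) := by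
    simp only [Finset.disjoint_left, Finset.mem_map, not_exists, not_and]
    rintro _ ⟨e, -, rfl⟩ f -
    induction e using Sym2.ind
    induction f using Sym2.ind
    simp [Function.Embedding.sym2Map]
  refine ⟨_, ?_, Finset.disjUnion_val _ _ hdisj⟩
  rw [Finset.coe_disjUnion, Finset.coe_map, Finset.coe_map, hG, hH, edgeSet_sum]
  rfl

lemma deleteEdges_sum_inl (G : SimpleGraph V) (H : SimpleGraph W) (e : Sym2 V) :
    (G ⊕g H).deleteEdges {e.map Sum.inl} = G.deleteEdges {e} ⊕g H := by
  induction e using Sym2.ind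
  ext (a | a) (b | b) <;> simp

lemma deleteEdges_sum_inr (G : SimpleGraph V) (H : SimpleGraph W) (e : Sym2 W) :
    (G ⊕g H).deleteEdges {e.map Sum.inr} = G ⊕g H.deleteEdges {e} := by
  induction e using Sym2.ind
  ext (a | a) (b | b) <;> simp

/-- Every induced two-edge path `a - b - c` is counted twice, once in each direction. -/
noncomputable def inducedCherryCount (G : SimpleGraph V) : ℕ :=
  Nat.card {p : V × V × V // G.Adj p.1 p.2.1 ∧ G.Adj p.2.1 p.2.2 ∧ p.1 ≠ p.2.2 ∧ ¬ G.Adj p.1 p.2.2}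

lemma Iso.inducedCherryCount_eq {G : SimpleGraph V} {H : SimpleGraph W} (φ : G ≃g H) :
    G.inducedCherryCount = H.inducedCherryCount :=
  Nat.card_congr <| (φ.toEquiv.prodCongr (φ.toEquiv.prodCongr φ.toEquiv)).subtypeEquiv
    fun _ => by simp [φ.map_adj_iff]

lemma inducedCherryCount_sum [Finite V] [Finite W] (G : SimpleGraph V) (H : SimpleGraph W) :
    (G ⊕g H).inducedCherryCount = G.inducedCherryCount + H.inducedCherryCount := by
  classical
  have := Fintype.ofFinite V
  have := Fintype.ofFinite W
  simp only [inducedCherryCount, Nat.card_eq_fintype_card, Fintype.card_subtype,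
    Finset.card_filter, Fintype.sum_prod_type, Fintype.sum_sum_type]
  simp

end SimpleGraph

def GraphClass.disjUnion : GraphClass → GraphClass → GraphClass :=
  Quotient.map₂ FGraph.disjUnion fun _ _ ⟨e⟩ _ _ ⟨f⟩ => ⟨e.sumCongr f⟩

namespace FGraph

variable {V : Type} [Finite V]

lemma edgeDeck_mk (G : SimpleGraph V) (s : Finset (Sym2 V))
    (hs : (s : Set (Sym2 V)) = G.edgeSet) :
    (⟨V, G⟩ : FGraph).edgeDeck = s.val.map fun e => (⟨V, G.deleteEdges {e}⟩ : FGraph).cls := by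
  have : G.edgeSet.toFinite.toFinset = s := by ext; simp [← hs]
  rw [edgeDeck, deckGraphs, this, Multiset.map_map]
  rfl

lemma edgeCount_mk (G : SimpleGraph V) (s : Finset (Sym2 V))
    (hs : (s : Set (Sym2 V)) = G.edgeSet) :
    (⟨V, G⟩ : FGraph).edgeCount = s.card := by
  rw [edgeCount, ← hs, Set.ncard_coe_finset]

lemma edgeDeck_disjUnion (G H : FGraph) :
    (G.disjUnion H).edgeDeck =
      G.edgeDeck.map (·.disjUnion H.cls) + H.edgeDeck.map (G.cls.disjUnion ·) := by
  have hG := G.graph.edgeSet.toFinite.coe_toFinset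
  have hH := H.graph.edgeSet.toFinite.coe_toFinset
  obtain ⟨s, hs, hval⟩ := exists_finset_edgeSet_sum hG hH
  rw [disjUnion, edgeDeck_mk _ s hs, hval, edgeDeck_mk G.graph _ hG, edgeDeck_mk H.graph _ hH]
  simp only [Multiset.map_add, Multiset.map_map, Function.comp_def, deleteEdges_sum_inl,
    deleteEdges_sum_inr]
  rfl

lemma edgeCount_disjUnion (G H : FGraph) :
    (G.disjUnion H).edgeCount = G.edgeCount + H.edgeCount := by
  have hG := G.graph.edgeSet.toFinite.coe_toFinset
  have hH := H.graph.edgeSet.toFinite.coe_toFinset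
  obtain ⟨s, hs, hval⟩ := exists_finset_edgeSet_sum hG hH
  rw [disjUnion, edgeCount_mk _ s hs, edgeCount_mk G.graph _ hG, edgeCount_mk H.graph _ hH,
    Finset.card_def, hval, Multiset.card_add, Multiset.card_map, Multiset.card_map]
  rfl

lemma inducedCherryCount_disjUnion (G H : FGraph) :
    (G.disjUnion H).graph.inducedCherryCount =
      G.graph.inducedCherryCount + H.graph.inducedCherryCount :=
  inducedCherryCount_sum G.graph H.graph

lemma sum_edgeDeck_map_disjUnion (M : Multiset FGraph) (X : FGraph) :
    ((M.map (·.disjUnion X)).map edgeDeck).sum =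
      (M.map edgeDeck).sum.map (·.disjUnion X.cls) +
        (M.map fun G => X.edgeDeck.map (G.cls.disjUnion ·)).sum := by
  induction M using Multiset.induction_on with
  | empty => simp
  | cons G M ih =>
    simp only [Multiset.map_cons, Multiset.sum_cons, edgeDeck_disjUnion, ih, Multiset.map_add]
    abel

lemma sum_edgeDeck_swap {M M' : Multiset FGraph} {X Y : FGraph}
    (hM : (M.map edgeDeck).sum = (M'.map edgeDeck).sum) (hXY : X.edgeDeck = Y.edgeDeck) :
    ((M.map (·.disjUnion X) + M'.map (·.disjUnion Y)).map edgeDeck).sum =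
      ((M.map (·.disjUnion Y) + M'.map (·.disjUnion X)).map edgeDeck).sum := by
  simp only [Multiset.map_add, Multiset.sum_add, sum_edgeDeck_map_disjUnion, hM, hXY]
  abel

abbrev ofEdges (s : Finset (Sym2 V)) : FGraph := ⟨V, fromEdgeSet s⟩

lemma edgeCount_ofEdges {s : Finset (Sym2 V)} (hs : ∀ e ∈ s, ¬ e.IsDiag) :
    (ofEdges s).edgeCount = s.card :=
  edgeCount_mk _ s (edgeSet_fromEdgeSet_of_not_isDiag hs).symm

lemma cls_ofEdges_eq_of_map {W : Type} [Finite W] (σ : V ≃ W)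
    {s : Finset (Sym2 V)} {t : Finset (Sym2 W)} (h : s.map σ.toEmbedding.sym2Map = t) :
    (ofEdges s).cls = (ofEdges t).cls := by
  refine Quotient.sound ⟨⟨σ, fun {a b : V} => ?_⟩⟩
  rw [fromEdgeSet_adj, fromEdgeSet_adj, ← h, Finset.mem_coe, Finset.mem_coe]
  exact and_congr (Finset.mem_map' σ.toEmbedding.sym2Map (a := s(a, b))) σ.injective.ne_iff

lemma edgeDeck_ofEdges_eq_replicate [DecidableEq V] {W : Type} [Finite W]
    {s : Finset (Sym2 V)} {t : Finset (Sym2 W)} (hs : ∀ e ∈ s, ¬ e.IsDiag)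
    (ht : ∀ e ∈ s, ∃ σ : V ≃ W, (s.erase e).map σ.toEmbedding.sym2Map = t) :
    (ofEdges s).edgeDeck = Multiset.replicate s.card (ofEdges t).cls := by
  rw [edgeDeck_mk _ s (edgeSet_fromEdgeSet_of_not_isDiag hs).symm]
  refine Multiset.eq_replicate.2 ⟨Multiset.card_map _ _, ?_⟩
  simp only [Multiset.mem_map, Finset.mem_val, forall_exists_index, and_imp]
  rintro _ e he rfl
  obtain ⟨σ, hσ⟩ := ht e he
  rw [deleteEdges_fromEdgeSet, ← Finset.coe_erase]
  exact cls_ofEdges_eq_of_map σ hσ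

end FGraph

open FGraph

lemma twoK2_eq_ofEdges : twoK2 = ofEdges ({s(0, 1), s(2, 3)} : Finset (Sym2 (Fin 4))) := by
  simp [twoK2]

lemma p3K1_eq_ofEdges : p3K1 = ofEdges ({s(0, 1), s(1, 2)} : Finset (Sym2 (Fin 4))) := by
  simp [p3K1]

lemma k3K1_eq_ofEdges : k3K1 = ofEdges ({s(0, 1), s(1, 2), s(0, 2)} : Finset (Sym2 (Fin 4))) := by
  simp [k3K1]

lemma k13_eq_ofEdges : k13 = ofEdges ({s(0, 1), s(0, 2), s(0, 3)} : Finset (Sym2 (Fin 4))) := by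
  simp [k13]

lemma edgeCount_twoK2 : twoK2.edgeCount = 2 := by
  rw [twoK2_eq_ofEdges, edgeCount_ofEdges (by decide)]; rfl

lemma edgeCount_p3K1 : p3K1.edgeCount = 2 := by
  rw [p3K1_eq_ofEdges, edgeCount_ofEdges (by decide)]; rfl

lemma edgeCount_k3K1 : k3K1.edgeCount = 3 := by
  rw [k3K1_eq_ofEdges, edgeCount_ofEdges (by decide)]; rfl

lemma edgeCount_k13 : k13.edgeCount = 3 := by
  rw [k13_eq_ofEdges, edgeCount_ofEdges (by decide)]; rfl

lemma edgeDeck_twoK2_eq_edgeDeck_p3K1 : twoK2.edgeDeck = p3K1.edgeDeck := by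
  let K2 : Finset (Sym2 (Fin 4)) := {s(0, 1)}
  rw [twoK2_eq_ofEdges, p3K1_eq_ofEdges,
    edgeDeck_ofEdges_eq_replicate (t := K2) (by decide) (by decide),
    edgeDeck_ofEdges_eq_replicate (t := K2) (by decide) (by decide)]
  rfl

lemma edgeDeck_k3K1_eq_edgeDeck_k13 : k3K1.edgeDeck = k13.edgeDeck := by
  let P3 : Finset (Sym2 (Fin 4)) := {s(0, 1), s(1, 2)}
  rw [k3K1_eq_ofEdges, k13_eq_ofEdges,
    edgeDeck_ofEdges_eq_replicate (t := P3) (by decide) (by decide),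
    edgeDeck_ofEdges_eq_replicate (t := P3) (by decide) (by decide)]
  rfl

lemma inducedCherryCount_twoK2 : twoK2.graph.inducedCherryCount = 0 := by
  rw [twoK2_eq_ofEdges, inducedCherryCount, Nat.card_eq_fintype_card]; decide

lemma inducedCherryCount_p3K1 : p3K1.graph.inducedCherryCount = 2 := by
  rw [p3K1_eq_ofEdges, inducedCherryCount, Nat.card_eq_fintype_card]; decide

lemma inducedCherryCount_k3K1 : k3K1.graph.inducedCherryCount = 0 := by
  rw [k3K1_eq_ofEdges, inducedCherryCount, Nat.card_eq_fintype_card]; decide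

lemma inducedCherryCount_k13 : k13.graph.inducedCherryCount = 6 := by
  rw [k13_eq_ofEdges, inducedCherryCount, Nat.card_eq_fintype_card]; decide

structure SeparatedCollision (n : ℕ) (M M' : Multiset FGraph) : Prop where
  card_eq : Multiset.card M = Multiset.card M'
  card_pos : 0 < Multiset.card M
  edgeCount_left : ∀ G ∈ M, G.edgeCount = n
  edgeCount_right : ∀ G ∈ M', G.edgeCount = n
  sum_edgeDeck_eq : (M.map edgeDeck).sum = (M'.map edgeDeck).sum
  cherry_left : ∀ G ∈ M, G.graph.inducedCherryCount % 4 = 0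
  cherry_right : ∀ G ∈ M', G.graph.inducedCherryCount % 4 = 2

namespace SeparatedCollision

variable {n : ℕ} {M M' : Multiset FGraph}

lemma map_cls_ne (h : SeparatedCollision n M M') : M.map cls ≠ M'.map cls := by
  intro heq
  obtain ⟨G, hG⟩ := Multiset.card_pos_iff_exists_mem.1 h.card_pos
  obtain ⟨G', hG', hcls⟩ := Multiset.mem_map.1 (heq ▸ Multiset.mem_map_of_mem cls hG)
  obtain ⟨φ⟩ := Quotient.exact hcls
  have := h.cherry_left G hG
  have := h.cherry_right G' hG'
  have := φ.inducedCherryCount_eq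
  omega

lemma gerFails (h : SeparatedCollision n M M') : GERFails n (Multiset.card M) :=
  ⟨M, M', rfl, h.card_eq.symm, h.edgeCount_left, h.edgeCount_right, h.map_cls_ne,
    h.sum_edgeDeck_eq⟩

lemma disjUnion_twoK2_sub_p3K1 (h : SeparatedCollision n M M') :
    SeparatedCollision (n + 2) (M.map (·.disjUnion twoK2) + M'.map (·.disjUnion p3K1))
      (M.map (·.disjUnion p3K1) + M'.map (·.disjUnion twoK2)) where
  card_eq := by simp [h.card_eq, add_comm]
  card_pos := by simpa using Or.inl h.card_pos
  edgeCount_left := by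
    simp only [Multiset.mem_add, Multiset.mem_map]
    rintro _ (⟨G, hG, rfl⟩ | ⟨G, hG, rfl⟩)
    · rw [edgeCount_disjUnion, h.edgeCount_left G hG, edgeCount_twoK2]
    · rw [edgeCount_disjUnion, h.edgeCount_right G hG, edgeCount_p3K1]
  edgeCount_right := by
    simp only [Multiset.mem_add, Multiset.mem_map]
    rintro _ (⟨G, hG, rfl⟩ | ⟨G, hG, rfl⟩)
    · rw [edgeCount_disjUnion, h.edgeCount_left G hG, edgeCount_p3K1]
    · rw [edgeCount_disjUnion, h.edgeCount_right G hG, edgeCount_twoK2]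
  sum_edgeDeck_eq := sum_edgeDeck_swap h.sum_edgeDeck_eq edgeDeck_twoK2_eq_edgeDeck_p3K1
  cherry_left := by
    simp only [Multiset.mem_add, Multiset.mem_map]
    rintro _ (⟨G, hG, rfl⟩ | ⟨G, hG, rfl⟩)
    · have := h.cherry_left G hG
      rw [inducedCherryCount_disjUnion, inducedCherryCount_twoK2]; omega
    · have := h.cherry_right G hG
      rw [inducedCherryCount_disjUnion, inducedCherryCount_p3K1]; omega
  cherry_right := by
    simp only [Multiset.mem_add, Multiset.mem_map]
    rintro _ (⟨G, hG, rfl⟩ | ⟨G, hG, rfl⟩)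
    · have := h.cherry_left G hG
      rw [inducedCherryCount_disjUnion, inducedCherryCount_p3K1]; omega
    · have := h.cherry_right G hG
      rw [inducedCherryCount_disjUnion, inducedCherryCount_twoK2]; omega

end SeparatedCollision

lemma separatedCollision_twoK2_p3K1 : SeparatedCollision 2 {twoK2} {p3K1} where
  card_eq := rfl
  card_pos := by simp
  edgeCount_left := by simp [edgeCount_twoK2]
  edgeCount_right := by simp [edgeCount_p3K1]
  sum_edgeDeck_eq := by simp [edgeDeck_twoK2_eq_edgeDeck_p3K1]
  cherry_left := by simp [inducedCherryCount_twoK2]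
  cherry_right := by simp [inducedCherryCount_p3K1]

lemma separatedCollision_k3K1_k13 : SeparatedCollision 3 {k3K1} {k13} where
  card_eq := rfl
  card_pos := by simp
  edgeCount_left := by simp [edgeCount_k3K1]
  edgeCount_right := by simp [edgeCount_k13]
  sum_edgeDeck_eq := by simp [edgeDeck_k3K1_eq_edgeDeck_k13]
  cherry_left := by simp [inducedCherryCount_k3K1]
  cherry_right := by simp [inducedCherryCount_k13]

lemma exists_separatedCollision {n : ℕ} (hn : 2 ≤ n) : ∃ M M', SeparatedCollision n M M' := by
  induction n using Nat.strong_induction_on with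
  | _ n ih =>
    match n, hn with
    | 2, _ => exact ⟨_, _, separatedCollision_twoK2_p3K1⟩
    | 3, _ => exact ⟨_, _, separatedCollision_k3K1_k13⟩
    | m + 4, _ =>
      obtain ⟨M, M', h⟩ := ih (m + 2) (by omega) (by omega)
      exact ⟨_, _, h.disjUnion_twoK2_sub_p3K1⟩

/-- for every `n ≥ 2` the generalized edge reconstruction conjecture
fails: there are `k ≥ 1` and two distinct multisets of `k` isomorphism classes of
graphs with exactly `n` edges whose total edge decks agree. -/
theorem generalized_edge_reconstruction_false (n : ℕ) (hn : 2 ≤ n) :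
    ∃ k : ℕ, 1 ≤ k ∧
      ∃ M M' : Multiset FGraph,
        Multiset.card M = k ∧ Multiset.card M' = k ∧
        (∀ G ∈ M, G.edgeCount = n) ∧ (∀ G ∈ M', G.edgeCount = n) ∧
        M.map FGraph.cls ≠ M'.map FGraph.cls ∧
        (M.map FGraph.edgeDeck).sum = (M'.map FGraph.edgeDeck).sum := by
  obtain ⟨M, M', h⟩ := exists_separatedCollision hn
  exact ⟨_, h.card_pos, h.gerFails⟩
end

section
/- Fix n ≥ 1. Let A be the quotient of the free abelian group on the set of isomorphism classes of graphs with at most n edges by the relations: [∅] = 0 for the empty graph ∅, and [G] = Σ_{i ∈ I} [G_i] whenever {G_i}_{i ∈ I} is a finite family of subgraphs of a graph G (with at most n edges) whose union is G and such that for all i ≠ j the subgraphs G_i and G_j have no edge of G in common. Then the homomorphism A → ℤ induced by [G] ↦ |E(G)| is a group isomorphism; in particular A is infinite cyclic, generated by the class of the one-edge graph K₂, and [G] = |E(G)|·[K₂] in A for every graph G with at most n edges. -/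
/-!
Counting edges is an isomorphism invariant and is additive over edge-disjoint covers, so it
descends to a homomorphism `K₀(Γ_{≤n}) → ℤ`. Conversely, an edgeless graph is the edge-disjoint
union of two copies of itself, so its class vanishes, and removing one edge `vw` covers `G` by
`G - vw` and the one-edge subgraph `≅ K₂`. By induction `[G] = |E(G)| • [K₂]`, and since
`[K₂] ↦ 1` the homomorphism is an isomorphism.
-/

open SimpleGraph

namespace FGraph

/-- A subgraph of `G`, regarded as a finite graph in its own right. -/
def ofSubgraph (G : FGraph) (H : G.graph.Subgraph) : FGraph :=
  { V := ↥H.verts, graph := H.coe }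

lemma edgeCount_ofSubgraph_le (G : FGraph) (H : G.graph.Subgraph) :
    (G.ofSubgraph H).edgeCount ≤ G.edgeCount := by
  classical
  have h1 : (G.ofSubgraph H).edgeCount
      = (Sym2.map ((↑) : ↥H.verts → G.V) ⁻¹' H.edgeSet).ncard := by
    simp [edgeCount, ofSubgraph, SimpleGraph.Subgraph.edgeSet_coe]
  rw [h1]
  calc (Sym2.map ((↑) : ↥H.verts → G.V) ⁻¹' H.edgeSet).ncard
      ≤ H.edgeSet.ncard :=
        Set.ncard_le_ncard_of_injOn _ (fun a ha => ha)
          ((Sym2.map.injective Subtype.val_injective).injOn) (Set.toFinite _)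
    _ ≤ G.graph.edgeSet.ncard := Set.ncard_le_ncard H.edgeSet_subset (Set.toFinite _)

end FGraph

/-- The empty graph (no vertices, no edges). -/
def emptyFGraph : FGraph := { V := Empty, graph := ⊥ }

lemma emptyFGraph_edgeCount : emptyFGraph.edgeCount = 0 := by
  simp [FGraph.edgeCount, emptyFGraph]

/-- The graph `K₂`: exactly two vertices joined by one edge. -/
def fGraphK2 : FGraph := { V := Fin 2, graph := ⊤ }

lemma fGraphK2_edgeCount : fGraphK2.edgeCount = 1 := by
  have h : (⊤ : SimpleGraph (Fin 2)).edgeSet = {s(0, 1)} := by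
    ext e
    induction e using Sym2.ind with
    | _ x y =>
      simp only [SimpleGraph.mem_edgeSet, SimpleGraph.top_adj, Set.mem_singleton_iff,
        Sym2.eq, Sym2.rel_iff', Prod.mk.injEq, Prod.swap_prod_mk]
      fin_cases x <;> fin_cases y <;> simp
  simp [FGraph.edgeCount, fGraphK2, h]

/-- Isomorphism classes of graphs with at most `n` edges. -/
def GClassLe (n : ℕ) : Type 1 :=
  {c : GraphClass // ∃ G : FGraph, G.cls = c ∧ G.edgeCount ≤ n}

/-- The relations defining `K₀(Γ_{≤ n})`: the class of the empty graph is zero, and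
`[G] = Σ_i [G_i]` whenever `(G_i)` is a finite family of subgraphs of `G` whose union
is `G` and whose members pairwise share no edge of `G`. -/
def GammaLeRel (n : ℕ) : AddSubgroup (FreeAbelianGroup (GClassLe n)) :=
  AddSubgroup.closure
    ({FreeAbelianGroup.of (⟨emptyFGraph.cls, emptyFGraph, rfl, by
        simp [emptyFGraph_edgeCount]⟩ : GClassLe n)} ∪
     {x | ∃ (G : FGraph) (hG : G.edgeCount ≤ n) (l : List G.graph.Subgraph),
        l.foldr (· ⊔ ·) ⊥ = ⊤ ∧
        l.Pairwise (fun H K => ∀ e, ¬(e ∈ H.edgeSet ∧ e ∈ K.edgeSet)) ∧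
        x = FreeAbelianGroup.of (⟨G.cls, G, rfl, hG⟩ : GClassLe n)
          - (l.map fun H => FreeAbelianGroup.of
              (⟨(G.ofSubgraph H).cls, G.ofSubgraph H, rfl,
                le_trans (G.edgeCount_ofSubgraph_le H) hG⟩ : GClassLe n)).sum})

/-- `K₀(Γ_{≤ n})`. -/
abbrev K0GammaLe (n : ℕ) : Type 1 := FreeAbelianGroup (GClassLe n) ⧸ GammaLeRel n

namespace SimpleGraph.Subgraph

variable {V : Type*} {G : SimpleGraph V}

theorem edgeSet_foldr_sup (l : List G.Subgraph) :
    (l.foldr (· ⊔ ·) ⊥).edgeSet = ⋃ H ∈ l, H.edgeSet := by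
  induction l with
  | nil => simp
  | cons H l ih => simp [edgeSet_sup, ih]

theorem ncard_edgeSet_foldr_sup [Finite V] (l : List G.Subgraph)
    (hl : l.Pairwise fun H K => Disjoint H.edgeSet K.edgeSet) :
    (l.foldr (· ⊔ ·) ⊥).edgeSet.ncard = (l.map fun H => H.edgeSet.ncard).sum := by
  induction l with
  | nil => simp
  | cons H l ih =>
    obtain ⟨hH, hl⟩ := List.pairwise_cons.1 hl
    have hdisj : Disjoint H.edgeSet (l.foldr (· ⊔ ·) ⊥).edgeSet := by
      simpa [edgeSet_foldr_sup, Set.disjoint_iUnion_right] using hH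
    rw [List.foldr_cons, edgeSet_sup, Set.ncard_union_eq hdisj, ih hl, List.map_cons,
      List.sum_cons]

end SimpleGraph.Subgraph

namespace FGraph

theorem edgeCount_eq_of_iso {G H : FGraph} (e : G.graph ≃g H.graph) :
    G.edgeCount = H.edgeCount := by
  rw [edgeCount, edgeCount, ← Nat.card_coe_set_eq, ← Nat.card_coe_set_eq]
  exact Nat.card_congr e.mapEdgeSet

theorem edgeCount_ofSubgraph (G : FGraph) (H : G.graph.Subgraph) :
    (G.ofSubgraph H).edgeCount = H.edgeSet.ncard := by
  rw [edgeCount, ← Subgraph.image_coe_edgeSet_coe]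
  exact (Set.ncard_image_of_injective _ (Sym2.map.injective Subtype.val_injective)).symm

theorem edgeCount_eq_sum_of_cover (G : FGraph) (l : List G.graph.Subgraph)
    (htop : l.foldr (· ⊔ ·) ⊥ = ⊤) (hl : l.Pairwise fun H K => Disjoint H.edgeSet K.edgeSet) :
    G.edgeCount = (l.map fun H => (G.ofSubgraph H).edgeCount).sum := by
  simp only [edgeCount_ofSubgraph]
  rw [← Subgraph.ncard_edgeSet_foldr_sup l hl, htop, Subgraph.edgeSet_top, edgeCount]

theorem cls_ofSubgraph_top (G : FGraph) : (G.ofSubgraph ⊤).cls = G.cls :=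
  Quotient.sound ⟨Subgraph.topIso⟩

theorem cls_ofSubgraph_toSubgraph (G : FGraph) (H : SimpleGraph G.V) (h : H ≤ G.graph) :
    (G.ofSubgraph (toSubgraph H h)).cls = ({ V := G.V, graph := H } : FGraph).cls :=
  Quotient.sound
    ⟨(Subgraph.spanningCoeEquivCoeOfSpanning _ (SimpleGraph.toSubgraph.isSpanning H h)).symm⟩

theorem cls_eq_fGraphK2_cls (G : FGraph) (htop : G.graph = ⊤)
    (hcard : Nat.card G.V = 2) :
    G.cls = fGraphK2.cls := by
  refine Quotient.sound ⟨?_⟩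
  rw [fGraphK2, htop]
  exact Iso.completeGraph (Finite.equivFinOfCardEq hcard)

theorem cls_ofSubgraph_subgraphOfAdj (G : FGraph) {v w : G.V} (h : G.graph.Adj v w) :
    (G.ofSubgraph (G.graph.subgraphOfAdj h)).cls = fGraphK2.cls := by
  refine cls_eq_fGraphK2_cls _ ?_ ?_
  · change (G.graph.subgraphOfAdj h).coe = ⊤
    ext ⟨a, ha⟩ ⟨b, hb⟩
    simp only [subgraphOfAdj_verts, Set.mem_insert_iff, Set.mem_singleton_iff] at ha hb
    rcases ha with rfl | rfl <;> rcases hb with rfl | rfl <;>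
      simp [h.ne, h.ne.symm, Sym2.eq_swap]
  · rw [ofSubgraph, Nat.card_coe_set_eq, subgraphOfAdj_verts, Set.ncard_pair h.ne]

def deleteEdges (G : FGraph) (s : Set (Sym2 G.V)) : FGraph :=
  { V := G.V, graph := G.graph.deleteEdges s }

theorem edgeCount_deleteEdges_add_one (G : FGraph) {e : Sym2 G.V} (he : e ∈ G.graph.edgeSet) :
    (G.deleteEdges {e}).edgeCount + 1 = G.edgeCount := by
  rw [deleteEdges, edgeCount, edgeSet_deleteEdges]
  exact Set.ncard_sdiff_singleton_add_one he

end FGraph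

noncomputable def GraphClass.edgeCount : GraphClass → ℕ :=
  Quotient.lift FGraph.edgeCount fun _ _ ⟨e⟩ => FGraph.edgeCount_eq_of_iso e

def GClassLe.ofGraph {n : ℕ} (G : FGraph) (hG : G.edgeCount ≤ n) : GClassLe n :=
  ⟨G.cls, G, rfl, hG⟩

namespace K0GammaLe

variable {n : ℕ}

def of (G : FGraph) (hG : G.edgeCount ≤ n) : K0GammaLe n :=
  QuotientAddGroup.mk (FreeAbelianGroup.of (GClassLe.ofGraph G hG))

theorem of_congr {G H : FGraph} (h : G.cls = H.cls) (hG : G.edgeCount ≤ n)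
    (hH : H.edgeCount ≤ n) : of G hG = of H hH := by
  rw [of, of, show GClassLe.ofGraph G hG = GClassLe.ofGraph H hH from Subtype.ext h]

theorem of_eq_add_of_sup_eq_top (G : FGraph) (hG : G.edgeCount ≤ n) (H K : G.graph.Subgraph)
    (hsup : H ⊔ K = ⊤) (hdisj : Disjoint H.edgeSet K.edgeSet) :
    of G hG = of (G.ofSubgraph H) ((G.edgeCount_ofSubgraph_le H).trans hG)
      + of (G.ofSubgraph K) ((G.edgeCount_ofSubgraph_le K).trans hG) := by
  have hrel : _ ∈ GammaLeRel n := AddSubgroup.subset_closure <| Or.inr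
    ⟨G, hG, [H, K], by simpa using hsup,
      List.pairwise_pair.2 fun e he => Set.disjoint_left.1 hdisj he.1 he.2, rfl⟩
  rw [← sub_eq_zero, ← (QuotientAddGroup.eq_zero_iff _).2 hrel]
  simp only [of, List.map_cons, List.map_nil, List.sum_cons, List.sum_nil, add_zero]
  rfl

theorem of_eq_zero_of_edgeCount_eq_zero (G : FGraph) (hG : G.edgeCount ≤ n)
    (h0 : G.edgeCount = 0) : of G hG = 0 := by
  have hempty : G.graph.edgeSet = ∅ := (Set.ncard_eq_zero).1 h0
  have hdouble := of_eq_add_of_sup_eq_top G hG ⊤ ⊤ (sup_idem _)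
    (by simp [Subgraph.edgeSet_top, hempty])
  rwa [of_congr (G.cls_ofSubgraph_top) _ hG, left_eq_add] at hdouble

theorem of_eq_of_deleteEdges_add_of_fGraphK2 (G : FGraph) (hG : G.edgeCount ≤ n) {v w : G.V}
    (h : G.graph.Adj v w) (hdel : (G.deleteEdges {s(v, w)}).edgeCount ≤ n)
    (hK2 : fGraphK2.edgeCount ≤ n) :
    of G hG = of (G.deleteEdges {s(v, w)}) hdel + of fGraphK2 hK2 := by
  have hsup : toSubgraph (G.graph.deleteEdges {s(v, w)}) (deleteEdges_le _)
      ⊔ G.graph.subgraphOfAdj h = ⊤ := by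
    ext a b
    · simp
    · by_cases hab : s(a, b) = s(v, w)
      · have hadj : G.graph.Adj a b := by rw [← mem_edgeSet, hab]; exact h
        simp [hab, hadj]
      · simp [hab, eq_comm (a := s(v, w))]
  have hdisj : Disjoint (toSubgraph (G.graph.deleteEdges {s(v, w)}) (deleteEdges_le _)).edgeSet
      (G.graph.subgraphOfAdj h).edgeSet := by
    rw [edgeSet_subgraphOfAdj, Set.disjoint_singleton_right, Subgraph.mem_edgeSet]
    simp
  rw [of_eq_add_of_sup_eq_top G hG _ _ hsup hdisj,
    of_congr (G.cls_ofSubgraph_toSubgraph _ _) _ hdel,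
    of_congr (G.cls_ofSubgraph_subgraphOfAdj h) _ hK2]
  rfl

theorem of_eq_edgeCount_nsmul_of_fGraphK2 (hK2 : fGraphK2.edgeCount ≤ n) (G : FGraph)
    (hG : G.edgeCount ≤ n) : of G hG = G.edgeCount • of fGraphK2 hK2 := by
  induction hm : G.edgeCount generalizing G with
  | zero => rw [zero_smul]; exact of_eq_zero_of_edgeCount_eq_zero G hG hm
  | succ m ih =>
    obtain ⟨v, w, h⟩ : ∃ v w, G.graph.Adj v w := by
      obtain ⟨e, he⟩ := Set.nonempty_of_ncard_ne_zero (s := G.graph.edgeSet) (by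
        rw [← FGraph.edgeCount, hm]; exact m.succ_ne_zero)
      induction e using Sym2.ind with
      | _ v w => exact ⟨v, w, he⟩
    have hdel := G.edgeCount_deleteEdges_add_one (e := s(v, w)) h
    rw [of_eq_of_deleteEdges_add_of_fGraphK2 G hG h (by omega) hK2, ih _ _ (by omega), succ_nsmul]

noncomputable def edgeCountHom (n : ℕ) : FreeAbelianGroup (GClassLe n) →+ ℤ :=
  FreeAbelianGroup.lift fun c => (GraphClass.edgeCount c.1 : ℤ)

@[simp]
theorem edgeCountHom_of (G : FGraph) (hG : G.edgeCount ≤ n) :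
    edgeCountHom n (FreeAbelianGroup.of (GClassLe.ofGraph G hG)) = G.edgeCount :=
  FreeAbelianGroup.lift_apply_of _ _

theorem edgeCountHom_of_sub_sum_eq_zero (G : FGraph) (hG : G.edgeCount ≤ n)
    (l : List G.graph.Subgraph) (htop : l.foldr (· ⊔ ·) ⊥ = ⊤)
    (hl : l.Pairwise fun H K => Disjoint H.edgeSet K.edgeSet) :
    edgeCountHom n (FreeAbelianGroup.of (GClassLe.ofGraph G hG) - (l.map fun H =>
      FreeAbelianGroup.of (GClassLe.ofGraph (G.ofSubgraph H)
        ((G.edgeCount_ofSubgraph_le H).trans hG))).sum) = 0 := by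
  simp [map_list_sum, Function.comp_def, G.edgeCount_eq_sum_of_cover l htop hl]

theorem GammaLeRel_le_ker : GammaLeRel n ≤ (edgeCountHom n).ker := by
  rw [GammaLeRel, AddSubgroup.closure_le]
  rintro x (rfl | ⟨G, hG, l, htop, hl, rfl⟩)
  · exact (edgeCountHom_of emptyFGraph (by simp [emptyFGraph_edgeCount])).trans
      (by simp [emptyFGraph_edgeCount])
  · exact edgeCountHom_of_sub_sum_eq_zero G hG l htop
      (hl.imp fun h => Set.disjoint_left.2 fun e he he' => h e ⟨he, he'⟩)

noncomputable def edgeCount (n : ℕ) : K0GammaLe n →+ ℤ :=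
  QuotientAddGroup.lift _ _ GammaLeRel_le_ker

theorem edgeCount_of (G : FGraph) (hG : G.edgeCount ≤ n) : edgeCount n (of G hG) = G.edgeCount :=
  FreeAbelianGroup.lift_apply_of _ _

theorem edgeCount_zsmul_of_fGraphK2 (hK2 : fGraphK2.edgeCount ≤ n) (x : K0GammaLe n) :
    edgeCount n x • of fGraphK2 hK2 = x := by
  suffices (zmultiplesHom _ (of fGraphK2 hK2)).comp (edgeCount n) = AddMonoidHom.id _ from
    DFunLike.congr_fun this x
  refine QuotientAddGroup.addMonoidHom_ext _ (FreeAbelianGroup.lift_ext _ _ ?_)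
  rintro ⟨_, G, rfl, hG⟩
  change edgeCount n (of G hG) • _ = of G hG
  rw [edgeCount_of, natCast_zsmul]
  exact (of_eq_edgeCount_nsmul_of_fGraphK2 hK2 G hG).symm

noncomputable def edgeCountEquiv (hK2 : fGraphK2.edgeCount ≤ n) : K0GammaLe n ≃+ ℤ where
  toFun := edgeCount n
  invFun k := k • of fGraphK2 hK2
  left_inv := edgeCount_zsmul_of_fGraphK2 hK2
  right_inv k := by simp [edgeCount_of, fGraphK2_edgeCount]
  map_add' := map_add _

end K0GammaLe

/-- the homomorphism `K₀(Γ_{≤n}) → ℤ` induced by `[G] ↦ |E(G)|` is a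
group isomorphism; in particular `K₀(Γ_{≤n})` is infinite cyclic generated by `[K₂]`,
and `[G] = |E(G)| • [K₂]` for every graph `G` with at most `n` edges. -/
theorem K0GammaLe_iso_int (n : ℕ) (hn : 1 ≤ n) :
    ∃ φ : K0GammaLe n ≃+ ℤ,
      (∀ (G : FGraph) (hG : G.edgeCount ≤ n),
        φ (QuotientAddGroup.mk (FreeAbelianGroup.of (⟨G.cls, G, rfl, hG⟩ : GClassLe n)))
          = (G.edgeCount : ℤ)) ∧
      (∀ (G : FGraph) (hG : G.edgeCount ≤ n),
        (QuotientAddGroup.mk (FreeAbelianGroup.of (⟨G.cls, G, rfl, hG⟩ : GClassLe n))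
            : K0GammaLe n)
          = G.edgeCount •
            (QuotientAddGroup.mk (FreeAbelianGroup.of
              (⟨fGraphK2.cls, fGraphK2, rfl, by rw [fGraphK2_edgeCount]; exact hn⟩ :
                GClassLe n)) : K0GammaLe n)) := by
  have hK2 : fGraphK2.edgeCount ≤ n := fGraphK2_edgeCount ▸ hn
  exact ⟨K0GammaLe.edgeCountEquiv hK2, K0GammaLe.edgeCount_of,
    K0GammaLe.of_eq_edgeCount_nsmul_of_fGraphK2 hK2⟩
end

section
/- Let X₀ be a set with a distinguished element ∅, let D : X₀ → Multiset X₀ be a decomposition, and call c ∈ X₀ fixed if D(c) = {c}. Assume: ∅ is fixed; for every non-fixed c, the multiset D(c) has at least two elements and c does not occur in D(c); there is a size map s : X₀ → ℕ such that s(∅) < s(c) for all c ≠ ∅, s takes at least three distinct values, and for every non-fixed c every element occurring in D(c) has size strictly less than s(c). For each n ∈ ℕ define D_n : X₀ → Multiset X₀ by D_n(c) = D(c) if c is non-fixed and s(c) = n, and D_n(c) = {c} otherwise. If s is D-recognizable, i.e. D(c) = D(c') implies s(c) = s(c'), then D is injective if and only if D_n is injective for every n ∈ ℕ. -/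
open Classical in
/-- atomic reconstruction by size. `X` is the set of isomorphism
classes with distinguished element `emp`, `D` is a decomposition (an element `c` is
*fixed* if `D c = {c}`), and `s` is a size map. If the size is `D`-recognizable, then
`D` is injective iff each of the size-`n` decompositions `D_n` is injective. -/
theorem atomic_reconstruction_by_size {X : Type*} (emp : X)
    (D : X → Multiset X) (s : X → ℕ)
    -- `∅` is fixed
    (h_emp_fixed : D emp = {emp})
    -- each non-fixed element decomposes into at least two pieces, none equal to itself
    (h_nonfixed : ∀ c, D c ≠ {c} → 2 ≤ Multiset.card (D c) ∧ c ∉ D c)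
    -- `∅` has strictly smallest size
    (h_size_emp : ∀ c, c ≠ emp → s emp < s c)
    -- the size map takes at least three distinct values
    (h_three : ∃ a b c : X, s a ≠ s b ∧ s b ≠ s c ∧ s a ≠ s c)
    -- pieces of a non-fixed element are strictly smaller
    (h_size_dec : ∀ c, D c ≠ {c} → ∀ d ∈ D c, s d < s c)
    -- the size is `D`-recognizable
    (h_recog : ∀ c c', D c = D c' → s c = s c') :
    Function.Injective D ↔
      ∀ n : ℕ, Function.Injective
        (fun c => if D c ≠ {c} ∧ s c = n then D c else ({c} : Multiset X)) := by
  constructor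
  · intro hD n c c' h
    simp only at h
    by_cases h1 : D c ≠ {c} ∧ s c = n <;> by_cases h2 : D c' ≠ {c'} ∧ s c' = n
    · rw [if_pos h1, if_pos h2] at h; exact hD h
    · rw [if_pos h1, if_neg h2] at h
      have := (h_nonfixed c h1.1).1
      rw [h] at this; simp at this
    · rw [if_neg h1, if_pos h2] at h
      have := (h_nonfixed c' h2.1).1
      rw [← h] at this; simp at this
    · rw [if_neg h1, if_neg h2] at h; simpa using h
  · intro hn c c' h
    by_cases hc : D c = {c} <;> by_cases hc' : D c' = {c'}
    · rw [hc, hc'] at h; simpa using h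
    · have := (h_nonfixed c' hc').1; rw [← h, hc] at this; simp at this
    · have := (h_nonfixed c hc).1; rw [h, hc'] at this; simp at this
    · have hs := h_recog c c' h
      apply hn (s c)
      show (if D c ≠ {c} ∧ s c = s c then D c else {c}) =
        (if D c' ≠ {c'} ∧ s c' = s c then D c' else {c'})
      rw [if_pos ⟨hc, rfl⟩, if_pos ⟨hc', hs.symm⟩]
      exact h
end
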